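/- arXiv:2306.14815 — 10 statements merged into one kernel-verified Lean document; each statement's English description precedes it below -/
import Mathlib

section
/- Let x, y, a, b, c, d : Bool and let S = {(a, b), (¬a, ¬b)}. Suppose (f, g) and (f', g') are two distinct strategy pairs with (f x, g y) ∈ S, (f (¬x), g (¬y)) = (c, d), (f' x, g' y) ∈ S and (f' (¬x), g' (¬y)) = (c, d). Then for each of the remaining inputs (x', y') ∈ {(¬x, y), (x, ¬y)}, the two outputs (f x', g y') and (f' x', g' y') agree in exactly one coordinate; in particular they are not complements of each other. (Paper's Lemma 1.) -/
/-- Paper's Lemma 1: if an input has a complement output pair and its complement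
input has a single outcome, then the two corresponding strategies produce
non-complement output pairs (agreeing in exactly one coordinate) on each of the
two remaining inputs. -/
theorem two_strategies_noncomplement_on_remaining_inputs
    (x y a b c d : Bool) (f g f' g' : Bool → Bool)
    (hne : (f, g) ≠ (f', g'))
    (h1 : (f x, g y) = (a, b) ∨ (f x, g y) = (!a, !b))
    (h2 : (f (!x), g (!y)) = (c, d))
    (h1' : (f' x, g' y) = (a, b) ∨ (f' x, g' y) = (!a, !b))
    (h2' : (f' (!x), g' (!y)) = (c, d)) :
    ∀ x' y' : Bool, ((x', y') = (!x, y) ∨ (x', y') = (x, !y)) →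
      (((f x' = f' x' ∧ g y' ≠ g' y') ∨ (f x' ≠ f' x' ∧ g y' = g' y')) ∧
        ¬ (f' x' = !(f x') ∧ g' y' = !(g y'))) := by
  have hfun : ∀ (h h' : Bool → Bool) (z : Bool), h z = h' z → h (!z) = h' (!z) → h = h' := by
    intro h h' z e1 e2; funext w; cases z <;> cases w <;> simp_all
  have key : ¬ (f x = f' x ∧ f (!x) = f' (!x) ∧ g y = g' y ∧ g (!y) = g' (!y)) := by
    rintro ⟨e1, e2, e3, e4⟩
    exact hne (by rw [hfun f f' x e1 e2, hfun g g' y e3 e4])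
  intro x' y' hxy
  rcases hxy with h | h <;> (injection h with hx hy; rw [hx, hy]) <;>
  · revert key h1 h2 h1' h2'
    generalize f x = p
    generalize f (!x) = q
    generalize g y = r
    generalize g (!y) = s
    generalize f' x = p'
    generalize f' (!x) = q'
    generalize g' y = r'
    generalize g' (!y) = s'
    revert a b c d p q r s p' q' r' s'
    simp only [Prod.mk.injEq]
    set_option synthInstance.maxSize 4000 in
    set_option synthInstance.maxHeartbeats 1000000 in
    set_option maxHeartbeats 4000000 in decide
end

section
/- Let W : (Bool × Bool) → (Bool × Bool) → Prop be the winning relation of a binary input binary output two-party nonlocal game, and suppose that for every input (x, y) ∈ Bool × Bool there exists an output (a, b) with W (x, y) (a, b). Then there exist strategy functions f, g : Bool → Bool such that the number of inputs (x, y) ∈ Bool × Bool with W (x, y) (f x, g y) is at least 2. Consequently the maximum classical success probability of any such game is at least 0.5. -/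
/-- If every input of a binary input binary output two-party game has at least
one winning output, then some classical deterministic strategy wins on at least
two of the four inputs; hence the maximum classical success probability is at
least `0.5`. -/
theorem classical_success_at_least_half
    (W : (Bool × Bool) → (Bool × Bool) → Prop)
    (hW : ∀ x y : Bool, ∃ a b : Bool, W (x, y) (a, b)) :
    ∃ f g : Bool → Bool,
      2 ≤ {p : Bool × Bool | W p (f p.1, g p.2)}.ncard ∧
      (1 / 2 : ℝ) ≤ ({p : Bool × Bool | W p (f p.1, g p.2)}.ncard : ℝ) / 4 := by
  obtain ⟨a, b, hab⟩ := hW false false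
  obtain ⟨a', b', hab'⟩ := hW true true
  refine ⟨fun x => if x then a' else a, fun y => if y then b' else b, ?_⟩
  have hsub : ({((false : Bool), (false : Bool)), (true, true)} : Set (Bool × Bool)) ⊆
      {p : Bool × Bool | W p ((if p.1 then a' else a), (if p.2 then b' else b))} := by
    rintro p (rfl | rfl) <;> simpa
  have h2 : ({((false : Bool), (false : Bool)), (true, true)} : Set (Bool × Bool)).ncard = 2 := by
    rw [Set.ncard_pair (by simp)]
  have hle : 2 ≤ {p : Bool × Bool | W p ((if p.1 then a' else a), (if p.2 then b' else b))}.ncard := by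
    rw [← h2]
    exact Set.ncard_le_ncard hsub (Set.toFinite _)
  refine ⟨hle, ?_⟩
  have : (2 : ℝ) ≤ ({p : Bool × Bool | W p ((if p.1 then a' else a), (if p.2 then b' else b))}.ncard : ℝ) := by
    exact_mod_cast hle
  linarith
end

section
/- Consider the CHSH game, whose winning relation is W (x, y) (a, b) ↔ (xor a b = (x && y)) for x, y, a, b : Bool. For every pair of strategy functions f, g : Bool → Bool, the number of inputs (x, y) ∈ Bool × Bool with xor (f x) (g y) = (x && y) is at most 3, and there exist f, g (e.g. f and g both constantly false) for which this number equals 3. Hence the maximum classical success probability of the CHSH game is exactly 3/4. -/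
/-- The maximum classical value of the CHSH game is exactly `3/4`. -/
theorem chsh_classical_value :
    (∀ f g : Bool → Bool,
      (Finset.univ.filter (fun p : Bool × Bool =>
        xor (f p.1) (g p.2) = (p.1 && p.2))).card ≤ 3) ∧
    (∃ f g : Bool → Bool,
      (Finset.univ.filter (fun p : Bool × Bool =>
        xor (f p.1) (g p.2) = (p.1 && p.2))).card = 3) := by
  constructor
  · intro f g
    have hf : f = fun x => bif x then f true else f false := by
      funext x; cases x <;> rfl
    have hg : g = fun x => bif x then g true else g false := by
      funext x; cases x <;> rfl
    rw [hf, hg]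
    revert hf hg
    cases f true <;> cases f false <;> cases g true <;> cases g false <;>
      intros <;> decide
  · exact ⟨fun _ => false, fun _ => false, by decide⟩
end

section
/- For all real numbers θ₀, θ₁, ψ₀, ψ₁, (1/4)·(cos(θ₀ − ψ₀)² + cos(θ₀ − ψ₁)² + cos(θ₁ − ψ₀)² + sin(θ₁ − ψ₁)²) ≤ 1/2 + 1/(2·√2), and equality holds for θ₀ = 0, θ₁ = π/4, ψ₀ = π/8, ψ₁ = 7π/8. Hence the maximum quantum success probability (over the paper's family of strategies) of the CHSH game, of partition 2+2+2+2, equals (2 + √2)/4 ≈ 0.853. -/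
open Real

lemma sqrt2_sq : Real.sqrt 2 * Real.sqrt 2 = 2 :=
  Real.mul_self_sqrt (by norm_num)

lemma key (A B C : ℝ) :
    cos A + cos B + cos C - cos (B + C - A) ≤ 2 * Real.sqrt 2 := by
  have h1 : cos B + cos C = 2 * cos ((B + C) / 2) * cos ((B - C) / 2) :=
    Real.cos_add_cos B C
  have h2 : cos A - cos (B + C - A) =
      -2 * sin ((A + (B + C - A)) / 2) * sin ((A - (B + C - A)) / 2) :=
    Real.cos_sub_cos A (B + C - A)
  set s := (B + C) / 2
  have hs : (A + (B + C - A)) / 2 = s := by ring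
  rw [hs] at h2
  have hc1 : cos ((B - C) / 2) ≤ 1 := Real.cos_le_one _
  have hc2 : -1 ≤ cos ((B - C) / 2) := Real.neg_one_le_cos _
  have hs1 : sin ((A - (B + C - A)) / 2) ≤ 1 := Real.sin_le_one _
  have hs2 : -1 ≤ sin ((A - (B + C - A)) / 2) := Real.neg_one_le_sin _
  have hpyth : sin s ^ 2 + cos s ^ 2 = 1 := Real.sin_sq_add_cos_sq s
  have hsq : Real.sqrt 2 * Real.sqrt 2 = 2 := sqrt2_sq
  have h0 : (0:ℝ) ≤ Real.sqrt 2 := Real.sqrt_nonneg 2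
  nlinarith [sq_nonneg (|cos s| - |sin s|), abs_nonneg (cos s), abs_nonneg (sin s),
    sq_abs (cos s), sq_abs (sin s), le_abs_self (cos s), neg_abs_le (cos s),
    le_abs_self (sin s), neg_abs_le (sin s), sq_nonneg (|cos s| + |sin s| - Real.sqrt 2),
    mul_le_mul_of_nonneg_left hc1 (abs_nonneg (cos s)),
    abs_mul_abs_self (cos s), abs_mul_abs_self (sin s),
    sq_nonneg (cos s * cos ((B-C)/2) - |cos s|),
    sq_nonneg (sin s * sin ((A - (B + C - A)) / 2) - |sin s|)]

/-- The maximum quantum success probability (over the paper's family of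
strategies) of the CHSH game (partition 2+2+2+2) equals
`1/2 + 1/(2√2) = (2 + √2)/4 ≈ 0.853`, attained at
`θ₀ = 0, θ₁ = π/4, ψ₀ = π/8, ψ₁ = 7π/8`. -/
theorem chsh_quantum_value :
    (∀ θ₀ θ₁ ψ₀ ψ₁ : ℝ,
      (1 / 4) * (cos (θ₀ - ψ₀) ^ 2 + cos (θ₀ - ψ₁) ^ 2 +
        cos (θ₁ - ψ₀) ^ 2 + sin (θ₁ - ψ₁) ^ 2)
        ≤ 1 / 2 + 1 / (2 * Real.sqrt 2)) ∧
    ((1 / 4) * (cos ((0 : ℝ) - π / 8) ^ 2 + cos ((0 : ℝ) - 7 * π / 8) ^ 2 +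
        cos (π / 4 - π / 8) ^ 2 + sin (π / 4 - 7 * π / 8) ^ 2)
        = 1 / 2 + 1 / (2 * Real.sqrt 2)) ∧
    (1 / 2 + 1 / (2 * Real.sqrt 2) = (2 + Real.sqrt 2) / 4) := by
  have hsq : Real.sqrt 2 * Real.sqrt 2 = 2 := sqrt2_sq
  have h0 : (0:ℝ) < Real.sqrt 2 := Real.sqrt_pos.mpr (by norm_num)
  have heq : 1 / (2 * Real.sqrt 2) = Real.sqrt 2 / 4 := by
    rw [div_eq_div_iff (by positivity) (by norm_num)]; nlinarith
  refine ⟨?_, ?_, ?_⟩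
  · intro θ₀ θ₁ ψ₀ ψ₁
    have hk := key (2*(θ₀ - ψ₀)) (2*(θ₀ - ψ₁)) (2*(θ₁ - ψ₀))
    have hD : 2*(θ₀ - ψ₁) + 2*(θ₁ - ψ₀) - 2*(θ₀ - ψ₀) = 2*(θ₁ - ψ₁) := by ring
    rw [hD] at hk
    have c1 := Real.cos_sq (θ₀ - ψ₀)
    have c2 := Real.cos_sq (θ₀ - ψ₁)
    have c3 := Real.cos_sq (θ₁ - ψ₀)
    have c4 := Real.sin_sq_eq_half_sub (θ₁ - ψ₁)
    rw [heq]
    rw [c1, c2, c3, c4]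
    ring_nf
    ring_nf at hk
    linarith
  · have c1 := Real.cos_sq ((0:ℝ) - π / 8)
    have c2 := Real.cos_sq ((0:ℝ) - 7 * π / 8)
    have c3 := Real.cos_sq (π / 4 - π / 8)
    have c4 := Real.sin_sq_eq_half_sub (π / 4 - 7 * π / 8)
    have e1 : 2 * ((0:ℝ) - π / 8) = -(π/4) := by ring
    have e2 : 2 * ((0:ℝ) - 7 * π / 8) = -(2*π - π/4) := by ring
    have e3 : 2 * (π / 4 - π / 8) = π/4 := by ring
    have e4 : 2 * (π / 4 - 7 * π / 8) = -(π + π/4) := by ring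
    rw [e1] at c1; rw [e2] at c2; rw [e3] at c3; rw [e4] at c4
    rw [Real.cos_neg] at c1 c2 c4
    rw [Real.cos_pi_div_four] at c1 c3
    have v2 : Real.cos (2*π - π/4) = Real.sqrt 2 / 2 := by
      rw [Real.cos_sub, Real.cos_two_pi, Real.sin_two_pi, Real.cos_pi_div_four]; ring
    have v4 : Real.cos (π + π/4) = -(Real.sqrt 2 / 2) := by
      rw [Real.cos_add, Real.cos_pi, Real.sin_pi, Real.cos_pi_div_four]; ring
    rw [v2] at c2; rw [v4] at c4
    rw [heq, c1, c2, c3, c4]; ring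
  · rw [heq]; ring
end

section
/- For all real numbers θ₀, θ₁, ψ₀, ψ₁, with α = θ₀ − ψ₀, β = θ₀ − ψ₁, γ = θ₁ − ψ₀, δ = θ₁ − ψ₁, one has (1/4)·(1/2 + (1/2)·cos α² + cos β² + (1/2)·sin γ² + cos δ²) ≤ 1/2 + √5/8, and there exist θ₀, θ₁, ψ₀, ψ₁ attaining equality. Hence the maximum quantum success probability of the paper's partition 3+2+2+1 game equals 1/2 + √5/8 ≈ 0.78. -/
open Real

lemma aux3221 (θ₀ θ₁ ψ₀ ψ₁ : ℝ) :
    (1 / 4) * (1 / 2 + (1 / 2) * cos (θ₀ - ψ₀) ^ 2 + cos (θ₀ - ψ₁) ^ 2 +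
        (1 / 2) * sin (θ₁ - ψ₀) ^ 2 + cos (θ₁ - ψ₁) ^ 2)
    = 1/2 - sin (θ₀+θ₁-2*ψ₀) * sin (θ₀-θ₁)/8 + cos (θ₀+θ₁-2*ψ₁) * cos (θ₀-θ₁)/4 := by
  have h1 : cos (θ₀ - ψ₀) ^ 2 = 1/2 + cos ((θ₀+θ₁-2*ψ₀) + (θ₀-θ₁)) / 2 := by
    rw [Real.cos_sq]; ring_nf
  have h2 : cos (θ₀ - ψ₁) ^ 2 = 1/2 + cos ((θ₀+θ₁-2*ψ₁) + (θ₀-θ₁)) / 2 := by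
    rw [Real.cos_sq]; ring_nf
  have h3 : sin (θ₁ - ψ₀) ^ 2 = 1/2 - cos ((θ₀+θ₁-2*ψ₀) - (θ₀-θ₁)) / 2 := by
    rw [Real.sin_sq_eq_half_sub]; ring_nf
  have h4 : cos (θ₁ - ψ₁) ^ 2 = 1/2 + cos ((θ₀+θ₁-2*ψ₁) - (θ₀-θ₁)) / 2 := by
    rw [Real.cos_sq]; ring_nf
  rw [h1, h2, h3, h4]
  generalize θ₀ + θ₁ - 2*ψ₀ = v
  generalize θ₀ + θ₁ - 2*ψ₁ = u
  generalize θ₀ - θ₁ = w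
  rw [Real.cos_add, Real.cos_add, Real.cos_sub, Real.cos_sub]
  ring

/-- The maximum quantum success probability of the paper's partition 3+2+2+1
game equals `1/2 + √5/8 ≈ 0.78`. -/
theorem partition_3221_quantum_value :
    (∀ θ₀ θ₁ ψ₀ ψ₁ : ℝ,
      (1 / 4) * (1 / 2 + (1 / 2) * cos (θ₀ - ψ₀) ^ 2 + cos (θ₀ - ψ₁) ^ 2 +
        (1 / 2) * sin (θ₁ - ψ₀) ^ 2 + cos (θ₁ - ψ₁) ^ 2)
        ≤ 1 / 2 + Real.sqrt 5 / 8) ∧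
    (∃ θ₀ θ₁ ψ₀ ψ₁ : ℝ,
      (1 / 4) * (1 / 2 + (1 / 2) * cos (θ₀ - ψ₀) ^ 2 + cos (θ₀ - ψ₁) ^ 2 +
        (1 / 2) * sin (θ₁ - ψ₀) ^ 2 + cos (θ₁ - ψ₁) ^ 2)
        = 1 / 2 + Real.sqrt 5 / 8) := by
  have h5 : Real.sqrt 5 ^ 2 = 5 := Real.sq_sqrt (by norm_num)
  have h5nn : (0:ℝ) ≤ Real.sqrt 5 := Real.sqrt_nonneg 5
  constructor
  · intro θ₀ θ₁ ψ₀ ψ₁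
    rw [aux3221]
    have pv := Real.sin_sq_add_cos_sq (θ₀+θ₁-2*ψ₀)
    have pu := Real.sin_sq_add_cos_sq (θ₀+θ₁-2*ψ₁)
    have pw := Real.sin_sq_add_cos_sq (θ₀-θ₁)
    set sv := sin (θ₀+θ₁-2*ψ₀); set cu := cos (θ₀+θ₁-2*ψ₁)
    set sw := sin (θ₀-θ₁); set cw := cos (θ₀-θ₁)
    nlinarith [sq_nonneg (sv * cw + 2 * cu * sw), sq_nonneg (sv * sw - 2 * cu * cw + Real.sqrt 5),
      sq_nonneg (sv * sw - 2 * cu * cw), sq_nonneg (sin (θ₀+θ₁-2*ψ₀)), sq_nonneg cu,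
      mul_nonneg h5nn h5nn]
  · refine ⟨arctan (1/2) / 2, -(arctan (1/2) / 2), π/4, 0, ?_⟩
    rw [aux3221]
    have e1 : arctan (1/2)/2 + -(arctan (1/2)/2) - 2*(π/4) = -(π/2) := by ring
    have e2 : arctan (1/2)/2 + -(arctan (1/2)/2) - 2*(0:ℝ) = 0 := by ring
    have e3 : arctan (1/2)/2 - -(arctan (1/2)/2) = arctan (1/2) := by ring
    rw [e1, e2, e3, Real.sin_neg, Real.sin_pi_div_two, Real.cos_zero]
    have hs : sin (arctan (1/2)) = (1/2) / Real.sqrt (1 + (1/2:ℝ)^2) := Real.sin_arctan _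
    have hc : cos (arctan (1/2)) = 1 / Real.sqrt (1 + (1/2:ℝ)^2) := Real.cos_arctan _
    have hr : Real.sqrt (1 + (1/2:ℝ)^2) = Real.sqrt 5 / 2 := by
      rw [show (1 + (1/2:ℝ)^2) = 5/4 by norm_num, show (5/4:ℝ) = 5/2^2 by norm_num,
        Real.sqrt_div (by norm_num : (0:ℝ) ≤ 5) (2^2), Real.sqrt_sq (by norm_num : (0:ℝ) ≤ 2)]
    have h5pos : (0:ℝ) < Real.sqrt 5 := Real.sqrt_pos.mpr (by norm_num)
    rw [hs, hc, hr]
    field_simp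
    ring_nf
    nlinarith [h5]
end

section
/- For all real numbers θ₀, θ₁, ψ₀, ψ₁, with α = θ₀ − ψ₀, β = θ₀ − ψ₁, γ = θ₁ − ψ₀, δ = θ₁ − ψ₁, one has (1/4)·(cos α² + 1/2 + (1/2)·sin β² + 1/2 + (1/2)·cos γ² + (1/2)·cos δ²) ≤ (1/4)·(9/4 + (√6 + √(3/2))/4), and there exist θ₀, θ₁, ψ₀, ψ₁ attaining equality. Hence the maximum quantum success probability of the paper's partition 3+3+2+1 game equals (1/4)(9/4 + (√6 + √(3/2))/4) ≈ 0.792. -/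
open Real

lemma amp (a b x : ℝ) : a * cos x + b * sin x ≤ Real.sqrt (a^2 + b^2) := by
  rcases le_or_gt (a * cos x + b * sin x) 0 with h | h
  · exact h.trans (Real.sqrt_nonneg _)
  · rw [Real.le_sqrt' h]
    nlinarith [sin_sq_add_cos_sq x, sq_nonneg (a * sin x - b * cos x)]

lemma sqrt_ineq (c : ℝ) (hc1 : -1 ≤ c) (hc2 : c ≤ 1) :
    Real.sqrt (5/16 - c/4) + Real.sqrt ((1+c)/8) ≤ 3 * Real.sqrt 6 / 8 := by
  have hA : Real.sqrt (5/16 - c/4) ^ 2 = 5/16 - c/4 := Real.sq_sqrt (by linarith)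
  have hB : Real.sqrt ((1+c)/8) ^ 2 = (1+c)/8 := Real.sq_sqrt (by linarith)
  have hA0 := Real.sqrt_nonneg (5/16 - c/4)
  have hB0 := Real.sqrt_nonneg ((1+c)/8)
  have hr : Real.sqrt 6 ^ 2 = 6 := Real.sq_sqrt (by norm_num)
  have hr0 : (0:ℝ) < Real.sqrt 6 := Real.sqrt_pos.mpr (by norm_num)
  nlinarith [sq_nonneg (Real.sqrt (5/16 - c/4) - Real.sqrt 6 / 4),
    sq_nonneg (Real.sqrt ((1+c)/8) - Real.sqrt 6 / 8),
    mul_pos hr0 hr0]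

lemma key_s12 (θ₀ θ₁ ψ₀ ψ₁ : ℝ) :
    (1/2) * cos (2*(θ₀-ψ₀)) - (1/4) * cos (2*(θ₀-ψ₁)) + (1/4) * cos (2*(θ₁-ψ₀))
      + (1/4) * cos (2*(θ₁-ψ₁)) ≤ 3 * Real.sqrt 6 / 8 := by
  set t := 2*(ψ₀ - ψ₁) with ht
  set X := 2*(θ₀ - ψ₀) with hX
  set Y := 2*(θ₁ - ψ₀) with hY
  have e1 : 2*(θ₀-ψ₁) = X + t := by rw [hX, ht]; ring
  have e2 : 2*(θ₁-ψ₁) = Y + t := by rw [hY, ht]; ring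
  rw [e1, e2, cos_add, cos_add]
  have h1 : (1/2 - cos t/4) * cos X + (sin t/4) * sin X ≤
      Real.sqrt ((1/2 - cos t/4)^2 + (sin t/4)^2) := amp _ _ _
  have h2 : (1/4 + cos t/4) * cos Y + (-(sin t/4)) * sin Y ≤
      Real.sqrt ((1/4 + cos t/4)^2 + (-(sin t/4))^2) := amp _ _ _
  have eA : (1/2 - cos t/4)^2 + (sin t/4)^2 = 5/16 - cos t/4 := by
    nlinarith [sin_sq_add_cos_sq t]
  have eB : (1/4 + cos t/4)^2 + (-(sin t/4))^2 = (1 + cos t)/8 := by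
    nlinarith [sin_sq_add_cos_sq t]
  rw [eA] at h1
  rw [eB] at h2
  have := sqrt_ineq (cos t) (neg_one_le_cos t) (cos_le_one t)
  nlinarith [h1, h2, this]

lemma h32' : Real.sqrt (3/2 : ℝ) = Real.sqrt 6 / 2 := by
  rw [show (3/2:ℝ) = 6 * (1/2)^2 by norm_num, Real.sqrt_mul (by norm_num),
    Real.sqrt_sq (by norm_num)]
  ring

lemma h1015' : Real.sqrt 10 * Real.sqrt 15 = 5 * Real.sqrt 6 := by
  rw [← Real.sqrt_mul (by norm_num : (0:ℝ) ≤ 10), show (10:ℝ)*15 = 6 * 5^2 by norm_num,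
    Real.sqrt_mul (by norm_num), Real.sqrt_sq (by norm_num)]
  ring

/-- The maximum quantum success probability of the paper's partition 3+3+2+1
game equals `(1/4)(9/4 + (√6 + √(3/2))/4) ≈ 0.792`. -/
theorem partition_3321_quantum_value :
    (∀ θ₀ θ₁ ψ₀ ψ₁ : ℝ,
      (1 / 4) * (cos (θ₀ - ψ₀) ^ 2 + 1 / 2 + (1 / 2) * sin (θ₀ - ψ₁) ^ 2 +
        1 / 2 + (1 / 2) * cos (θ₁ - ψ₀) ^ 2 + (1 / 2) * cos (θ₁ - ψ₁) ^ 2)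
        ≤ (1 / 4) * (9 / 4 + (Real.sqrt 6 + Real.sqrt (3 / 2)) / 4)) ∧
    (∃ θ₀ θ₁ ψ₀ ψ₁ : ℝ,
      (1 / 4) * (cos (θ₀ - ψ₀) ^ 2 + 1 / 2 + (1 / 2) * sin (θ₀ - ψ₁) ^ 2 +
        1 / 2 + (1 / 2) * cos (θ₁ - ψ₀) ^ 2 + (1 / 2) * cos (θ₁ - ψ₁) ^ 2)
        = (1 / 4) * (9 / 4 + (Real.sqrt 6 + Real.sqrt (3 / 2)) / 4)) := by
  constructor
  · intro θ₀ θ₁ ψ₀ ψ₁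
    have k := key_s12 θ₀ θ₁ ψ₀ ψ₁
    rw [Real.sin_sq]
    simp only [Real.cos_sq]
    rw [h32']
    linarith
  · set t := Real.arccos (-(1/4)) with htdef
    set φ₁ := Real.arccos (3 * Real.sqrt 6 / 8) with hp1def
    set φ₂ := Real.arccos (Real.sqrt 6 / 4) with hp2def
    have hr : Real.sqrt 6 ^ 2 = 6 := Real.sq_sqrt (by norm_num)
    have hr0 : (0:ℝ) ≤ Real.sqrt 6 := Real.sqrt_nonneg 6
    have hrle : Real.sqrt 6 ≤ 5/2 := by nlinarith
    have hct : cos t = -(1/4) := Real.cos_arccos (by norm_num) (by norm_num)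
    have hst : sin t = Real.sqrt 15 / 4 := by
      rw [htdef, Real.sin_arccos, show 1 - (-(1/4):ℝ)^2 = 15 * (1/4)^2 by norm_num,
        Real.sqrt_mul (by norm_num), Real.sqrt_sq (by norm_num)]
      ring
    have hc1 : cos φ₁ = 3 * Real.sqrt 6 / 8 :=
      Real.cos_arccos (by nlinarith) (by nlinarith)
    have hs1 : sin φ₁ = Real.sqrt 10 / 8 := by
      rw [hp1def, Real.sin_arccos,
        show 1 - (3 * Real.sqrt 6 / 8)^2 = 1 - 54 * (Real.sqrt 6 ^2) / (64*6) by ring,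
        hr, show 1 - 54*(6:ℝ)/(64*6) = 10 * (1/8)^2 by norm_num,
        Real.sqrt_mul (by norm_num), Real.sqrt_sq (by norm_num)]
      ring
    have hc2 : cos φ₂ = Real.sqrt 6 / 4 :=
      Real.cos_arccos (by nlinarith) (by nlinarith)
    have hs2 : sin φ₂ = Real.sqrt 10 / 4 := by
      rw [hp2def, Real.sin_arccos,
        show 1 - (Real.sqrt 6 / 4)^2 = 1 - (Real.sqrt 6 ^2) / 16 by ring,
        hr, show 1 - (6:ℝ)/16 = 10 * (1/4)^2 by norm_num,
        Real.sqrt_mul (by norm_num), Real.sqrt_sq (by norm_num)]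
      ring
    have E2 : cos (φ₁ + t) = -(Real.sqrt 6) / 4 := by
      rw [cos_add, hc1, hs1, hct, hst]
      linear_combination (-(1:ℝ)/32) * h1015'
    have E4 : cos (t - φ₂) = Real.sqrt 6 / 4 := by
      rw [cos_sub, hct, hc2, hst, hs2]
      linear_combination ((1:ℝ)/16) * h1015'
    refine ⟨φ₁/2, -(φ₂/2), 0, -(t/2), ?_⟩
    rw [Real.sin_sq]
    simp only [Real.cos_sq]
    rw [show 2*(φ₁/2 - (0:ℝ)) = φ₁ by ring,
      show 2*(φ₁/2 - -(t/2)) = φ₁ + t by ring,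
      show 2*(-(φ₂/2) - (0:ℝ)) = -φ₂ by ring,
      show 2*(-(φ₂/2) - -(t/2)) = t - φ₂ by ring,
      cos_neg, E2, E4, hc1, hc2, h32']
    ring
end

section
/- For all real numbers θ₀, θ₁, ψ₀, ψ₁, with α = θ₀ − ψ₀, β = θ₀ − ψ₁, γ = θ₁ − ψ₀, δ = θ₁ − ψ₁, one has (1/4)·((1/2)·cos α² + 1/2 + (1/2)·cos β² + 1/2 + (1/2)·cos γ² + 1/2 + (1/2)·sin δ²) ≤ 5/8 + √2/8, and equality holds for θ₀ = 0, θ₁ = π/4, ψ₀ = π/8, ψ₁ = 7π/8. Hence the maximum quantum success probability of the paper's partition 3+3+3+1 game equals 5/8 + √2/8 ≈ 0.80. -/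
set_option maxHeartbeats 1000000


open Real

private lemma chsh_key (ca sa cb sb cx sx cy sy : ℝ)
    (ha : ca ^ 2 + sa ^ 2 = 1) (hb : cb ^ 2 + sb ^ 2 = 1)
    (hx : cx ^ 2 + sx ^ 2 = 1) (hy : cy ^ 2 + sy ^ 2 = 1) :
    (ca * cx + sa * sx) + (ca * cy + sa * sy) + (cb * cx + sb * sx)
      - (cb * cy + sb * sy) ≤ 2 * Real.sqrt 2 := by
  set A := cx + cy with hA
  set B := sx + sy with hB
  set C := cx - cy with hC
  set D := sx - sy with hD
  have hsum : A ^ 2 + B ^ 2 + (C ^ 2 + D ^ 2) = 4 := by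
    simp only [hA, hB, hC, hD]; nlinarith [hx, hy]
  have hAB : (0:ℝ) ≤ A ^ 2 + B ^ 2 := by positivity
  have hCD : (0:ℝ) ≤ C ^ 2 + D ^ 2 := by positivity
  have h1 : ca * A + sa * B ≤ Real.sqrt (A ^ 2 + B ^ 2) := by
    nlinarith [Real.sq_sqrt hAB, Real.sqrt_nonneg (A ^ 2 + B ^ 2),
      sq_nonneg (ca * B - sa * A),
      sq_nonneg (ca * A + sa * B - Real.sqrt (A ^ 2 + B ^ 2))]
  have h2 : cb * C + sb * D ≤ Real.sqrt (C ^ 2 + D ^ 2) := by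
    nlinarith [Real.sq_sqrt hCD, Real.sqrt_nonneg (C ^ 2 + D ^ 2),
      sq_nonneg (cb * D - sb * C),
      sq_nonneg (cb * C + sb * D - Real.sqrt (C ^ 2 + D ^ 2))]
  have h3 : Real.sqrt (A ^ 2 + B ^ 2) + Real.sqrt (C ^ 2 + D ^ 2)
      ≤ 2 * Real.sqrt 2 := by
    nlinarith [Real.sq_sqrt hAB, Real.sq_sqrt hCD,
      Real.sq_sqrt (show (0:ℝ) ≤ 2 by norm_num),
      Real.sqrt_nonneg (A ^ 2 + B ^ 2), Real.sqrt_nonneg (C ^ 2 + D ^ 2),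
      Real.sqrt_nonneg 2,
      sq_nonneg (Real.sqrt (A ^ 2 + B ^ 2) - Real.sqrt (C ^ 2 + D ^ 2)),
      sq_nonneg (Real.sqrt (A ^ 2 + B ^ 2) + Real.sqrt (C ^ 2 + D ^ 2)
        - 2 * Real.sqrt 2)]
  have hrw : (ca * cx + sa * sx) + (ca * cy + sa * sy) + (cb * cx + sb * sx)
      - (cb * cy + sb * sy) = (ca * A + sa * B) + (cb * C + sb * D) := by
    simp only [hA, hB, hC, hD]; ring
  linarith [h1, h2, h3, hrw.le, hrw.ge]

/-- The maximum quantum success probability of the paper's partition 3+3+3+1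
game equals `5/8 + √2/8 ≈ 0.80`, attained at
`θ₀ = 0, θ₁ = π/4, ψ₀ = π/8, ψ₁ = 7π/8`. -/
theorem partition_3331_quantum_value :
    (∀ θ₀ θ₁ ψ₀ ψ₁ : ℝ,
      (1 / 4) * ((1 / 2) * cos (θ₀ - ψ₀) ^ 2 + 1 / 2 + (1 / 2) * cos (θ₀ - ψ₁) ^ 2 +
        1 / 2 + (1 / 2) * cos (θ₁ - ψ₀) ^ 2 + 1 / 2 + (1 / 2) * sin (θ₁ - ψ₁) ^ 2)
        ≤ 5 / 8 + Real.sqrt 2 / 8) ∧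
    ((1 / 4) * ((1 / 2) * cos ((0 : ℝ) - π / 8) ^ 2 + 1 / 2 +
        (1 / 2) * cos ((0 : ℝ) - 7 * π / 8) ^ 2 + 1 / 2 +
        (1 / 2) * cos (π / 4 - π / 8) ^ 2 + 1 / 2 +
        (1 / 2) * sin (π / 4 - 7 * π / 8) ^ 2)
        = 5 / 8 + Real.sqrt 2 / 8) := by
  constructor
  · intro θ₀ θ₁ ψ₀ ψ₁
    have e1 : cos (θ₀ - ψ₀) ^ 2 = 1 / 2 + cos (2 * θ₀ - 2 * ψ₀) / 2 := by
      rw [Real.cos_sq]; ring_nf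
    have e2 : cos (θ₀ - ψ₁) ^ 2 = 1 / 2 + cos (2 * θ₀ - 2 * ψ₁) / 2 := by
      rw [Real.cos_sq]; ring_nf
    have e3 : cos (θ₁ - ψ₀) ^ 2 = 1 / 2 + cos (2 * θ₁ - 2 * ψ₀) / 2 := by
      rw [Real.cos_sq]; ring_nf
    have e4 : sin (θ₁ - ψ₁) ^ 2 = 1 / 2 - cos (2 * θ₁ - 2 * ψ₁) / 2 := by
      rw [Real.sin_sq, Real.cos_sq, show 2 * (θ₁ - ψ₁) = 2 * θ₁ - 2 * ψ₁ by ring]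
      ring
    rw [e1, e2, e3, e4]
    have key := chsh_key (cos (2 * θ₀)) (sin (2 * θ₀)) (cos (2 * θ₁)) (sin (2 * θ₁))
      (cos (2 * ψ₀)) (sin (2 * ψ₀)) (cos (2 * ψ₁)) (sin (2 * ψ₁))
      (by rw [add_comm]; exact Real.sin_sq_add_cos_sq _)
      (by rw [add_comm]; exact Real.sin_sq_add_cos_sq _)
      (by rw [add_comm]; exact Real.sin_sq_add_cos_sq _)
      (by rw [add_comm]; exact Real.sin_sq_add_cos_sq _)
    simp only [Real.cos_sub]
    linarith [key]
  · have hc8 : cos (π / 8) ^ 2 = 1 / 2 + Real.sqrt 2 / 4 := by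
      rw [Real.cos_sq, show 2 * (π / 8) = π / 4 by ring, Real.cos_pi_div_four]
      ring
    have h1 : cos ((0 : ℝ) - π / 8) = cos (π / 8) := by
      rw [zero_sub, Real.cos_neg]
    have h2 : cos ((0 : ℝ) - 7 * π / 8) ^ 2 = cos (π / 8) ^ 2 := by
      rw [zero_sub, Real.cos_neg, show 7 * π / 8 = π - π / 8 by ring,
        Real.cos_pi_sub]
      ring
    have h3 : cos (π / 4 - π / 8) = cos (π / 8) := by
      rw [show π / 4 - π / 8 = π / 8 by ring]
    have h4 : sin (π / 4 - 7 * π / 8) ^ 2 = cos (π / 8) ^ 2 := by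
      rw [show π / 4 - 7 * π / 8 = -(π / 2 + π / 8) by ring, Real.sin_neg,
        Real.sin_add, Real.sin_pi_div_two, Real.cos_pi_div_two]
      ring
    rw [h1, h2, h3, h4, hc8]
    ring
end

section
/- For all real numbers θ₀, θ₁, ψ₀, ψ₁, with α = θ₀ − ψ₀, β = θ₀ − ψ₁, γ = θ₁ − ψ₀, δ = θ₁ − ψ₁, one has (1/4)·(1/2 + (1/2)·sin α² + (1/2)·cos β² + (1/2)·sin γ² + (1/2)·sin δ²) ≤ 3/8 + √2/8, and equality holds for θ₀ = 0, θ₁ = π/4, ψ₀ = 5π/8, ψ₁ = 7π/8. Hence the maximum quantum success probability of the paper's partition 3+1+1+1 game equals 3/8 + √2/8 ≈ 0.55. -/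
open Real

lemma inner_le_aux (u v x y : ℝ) (h : u ^ 2 + v ^ 2 = 1) :
    u * x + v * y ≤ Real.sqrt (x ^ 2 + y ^ 2) := by
  have hsq : (u * x + v * y) ^ 2 ≤ x ^ 2 + y ^ 2 := by nlinarith [sq_nonneg (u * y - v * x)]
  calc u * x + v * y ≤ |u * x + v * y| := le_abs_self _
    _ = Real.sqrt ((u * x + v * y) ^ 2) := (Real.sqrt_sq_eq_abs _).symm
    _ ≤ Real.sqrt (x ^ 2 + y ^ 2) := Real.sqrt_le_sqrt hsq

lemma chsh (a b c d : ℝ) :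
    -Real.cos (a - c) + Real.cos (a - d) - Real.cos (b - c) - Real.cos (b - d)
      ≤ 2 * Real.sqrt 2 := by
  have pa := Real.sin_sq_add_cos_sq a
  have pb := Real.sin_sq_add_cos_sq b
  have pc := Real.sin_sq_add_cos_sq c
  have pd := Real.sin_sq_add_cos_sq d
  have h1 : Real.cos a * (Real.cos d - Real.cos c) + Real.sin a * (Real.sin d - Real.sin c)
      ≤ Real.sqrt ((Real.cos d - Real.cos c) ^ 2 + (Real.sin d - Real.sin c) ^ 2) :=
    inner_le_aux _ _ _ _ (by linarith)
  have h2 : Real.cos b * (-(Real.cos c + Real.cos d)) + Real.sin b * (-(Real.sin c + Real.sin d))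
      ≤ Real.sqrt ((-(Real.cos c + Real.cos d)) ^ 2 + (-(Real.sin c + Real.sin d)) ^ 2) :=
    inner_le_aux _ _ _ _ (by linarith)
  set x := (Real.cos d - Real.cos c) ^ 2 + (Real.sin d - Real.sin c) ^ 2 with hxdef
  set y := (-(Real.cos c + Real.cos d)) ^ 2 + (-(Real.sin c + Real.sin d)) ^ 2 with hydef
  have hxy : x + y = 4 := by
    rw [hxdef, hydef]; linear_combination 2 * pc + 2 * pd
  have hx0 : (0:ℝ) ≤ x := by positivity
  have hy0 : (0:ℝ) ≤ y := by positivity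
  have hsx := Real.sq_sqrt hx0
  have hsy := Real.sq_sqrt hy0
  have hs2 : Real.sqrt 2 ^ 2 = 2 := Real.sq_sqrt (by norm_num)
  have hbound : Real.sqrt x + Real.sqrt y ≤ 2 * Real.sqrt 2 := by
    have hst : (Real.sqrt x + Real.sqrt y) ^ 2 ≤ 8 := by
      nlinarith [sq_nonneg (Real.sqrt x - Real.sqrt y)]
    have h8 : Real.sqrt 8 = 2 * Real.sqrt 2 := by
      rw [show (8:ℝ) = 2 ^ 2 * 2 by norm_num, Real.sqrt_mul (by positivity),
        Real.sqrt_sq (by norm_num)]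
    calc Real.sqrt x + Real.sqrt y
        = Real.sqrt ((Real.sqrt x + Real.sqrt y) ^ 2) :=
          (Real.sqrt_sq (by positivity)).symm
      _ ≤ Real.sqrt 8 := Real.sqrt_le_sqrt hst
      _ = 2 * Real.sqrt 2 := h8
  have e : -Real.cos (a - c) + Real.cos (a - d) - Real.cos (b - c) - Real.cos (b - d)
      = (Real.cos a * (Real.cos d - Real.cos c) + Real.sin a * (Real.sin d - Real.sin c))
        + (Real.cos b * (-(Real.cos c + Real.cos d)) + Real.sin b * (-(Real.sin c + Real.sin d))) := by
    simp [Real.cos_sub]; ring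
  rw [e]
  linarith [h1, h2]

/-- The maximum quantum success probability of the paper's partition 3+1+1+1
game equals `3/8 + √2/8 ≈ 0.55`, attained at
`θ₀ = 0, θ₁ = π/4, ψ₀ = 5π/8, ψ₁ = 7π/8`. -/
theorem partition_3111_quantum_value :
    (∀ θ₀ θ₁ ψ₀ ψ₁ : ℝ,
      (1 / 4) * (1 / 2 + (1 / 2) * sin (θ₀ - ψ₀) ^ 2 + (1 / 2) * cos (θ₀ - ψ₁) ^ 2 +
        (1 / 2) * sin (θ₁ - ψ₀) ^ 2 + (1 / 2) * sin (θ₁ - ψ₁) ^ 2)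
        ≤ 3 / 8 + Real.sqrt 2 / 8) ∧
    ((1 / 4) * (1 / 2 + (1 / 2) * sin ((0 : ℝ) - 5 * π / 8) ^ 2 +
        (1 / 2) * cos ((0 : ℝ) - 7 * π / 8) ^ 2 +
        (1 / 2) * sin (π / 4 - 5 * π / 8) ^ 2 +
        (1 / 2) * sin (π / 4 - 7 * π / 8) ^ 2)
        = 3 / 8 + Real.sqrt 2 / 8) := by
  constructor
  · intro θ₀ θ₁ ψ₀ ψ₁
    simp only [Real.sin_sq, Real.cos_sq]
    have h := chsh (2*θ₀) (2*θ₁) (2*ψ₀) (2*ψ₁)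
    rw [show 2*θ₀ - 2*ψ₀ = 2*(θ₀ - ψ₀) by ring, show 2*θ₀ - 2*ψ₁ = 2*(θ₀ - ψ₁) by ring,
      show 2*θ₁ - 2*ψ₀ = 2*(θ₁ - ψ₀) by ring, show 2*θ₁ - 2*ψ₁ = 2*(θ₁ - ψ₁) by ring] at h
    linarith
  · simp only [Real.sin_sq, Real.cos_sq]
    have c1 : Real.cos (2 * ((0:ℝ) - 5 * π / 8)) = -(Real.sqrt 2 / 2) := by
      rw [show 2 * ((0:ℝ) - 5 * π / 8) = -(π + π/4) by ring, Real.cos_neg, Real.cos_add]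
      simp [Real.cos_pi_div_four]
    have c2 : Real.cos (2 * ((0:ℝ) - 7 * π / 8)) = Real.sqrt 2 / 2 := by
      rw [show 2 * ((0:ℝ) - 7 * π / 8) = -(2*π - π/4) by ring, Real.cos_neg, Real.cos_sub]
      simp [Real.cos_pi_div_four, Real.cos_two_pi, Real.sin_two_pi]
    have c3 : Real.cos (2 * (π / 4 - 5 * π / 8)) = -(Real.sqrt 2 / 2) := by
      rw [show 2 * (π / 4 - 5 * π / 8) = -(π - π/4) by ring, Real.cos_neg, Real.cos_pi_sub]
      simp [Real.cos_pi_div_four]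
    have c4 : Real.cos (2 * (π / 4 - 7 * π / 8)) = -(Real.sqrt 2 / 2) := by
      rw [show 2 * (π / 4 - 7 * π / 8) = -(π + π/4) by ring, Real.cos_neg, Real.cos_add]
      simp [Real.cos_pi_div_four]
    rw [c1, c2, c3, c4]; ring
end

section
/- For all real numbers θ₀, θ₁, ψ₀, ψ₁, with α = θ₀ − ψ₀, β = θ₀ − ψ₁, γ = θ₁ − ψ₀, δ = θ₁ − ψ₁, one has (1/4)·(sin α² + (1/2)·cos β² + (1/2)·sin γ² + (1/2)·sin δ²) ≤ (1/4)·(5/4 + (√6 + √(3/2))/4), and there exist θ₀, θ₁, ψ₀, ψ₁ attaining equality. Hence the maximum quantum success probability of the paper's partition 2+1+1+1 game equals (1/4)(5/4 + (√6 + √(3/2))/4) ≈ 0.542. -/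
/-!
With `a = 2θ₀, b = 2θ₁, c = 2ψ₀, d = 2ψ₁`, the half-angle formulas turn the success
probability into `5/16 + F/8` for the correlator
`F = -cos (a - c) + cos (a - d)/2 - cos (b - c)/2 - cos (b - d)/2`.
Expanding `cos (a - d)` and `cos (b - d)` around `c - d = t`, the terms in `a` and in `b` are
two sinusoids with squared amplitudes `A = 5/4 - cos t` and `B = (1 + cos t)/2`. Since
`A + 2B = 9/4` for every `t`, Cauchy–Schwarz bounds the sum of amplitudes by
`√(3/2 · 9/4) = 3/2 · √(3/2)`, with equality when `cos t = -1/4`; choosing `a` and `b` at the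
peaks of the two sinusoids attains it.
-/

open Real

lemma isGreatest_mul_cos_add_mul_sin (A B : ℝ) :
    IsGreatest (Set.range fun x => A * cos x + B * sin x) √(A ^ 2 + B ^ 2) := by
  refine ⟨?_, ?_⟩
  · set z : ℂ := ⟨A, B⟩
    refine ⟨Complex.arg z, ?_⟩
    beta_reduce
    have hnorm : ‖z‖ = √(A ^ 2 + B ^ 2) := Complex.norm_eq_sqrt_sq_add_sq z
    rcases eq_or_ne z 0 with hz | hz
    · have hA : A = 0 := congrArg Complex.re hz
      have hB : B = 0 := congrArg Complex.im hz
      simp [hA, hB]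
    · have hpos : 0 < √(A ^ 2 + B ^ 2) := hnorm ▸ norm_pos_iff.2 hz
      rw [Complex.cos_arg hz, Complex.sin_arg, hnorm]
      field_simp
      rw [sq_sqrt (by positivity)]
      ring
  · rintro _ ⟨x, rfl⟩
    apply le_sqrt_of_sq_le
    nlinarith [sin_sq_add_cos_sq x, sq_nonneg (A * sin x - B * cos x)]

lemma sqrt_add_sqrt_le_sqrt_mul {A B w : ℝ} (hA : 0 ≤ A) (hB : 0 ≤ B) (hw : 0 < w) :
    √A + √B ≤ √((1 + w⁻¹) * (A + w * B)) := by
  apply le_sqrt_of_sq_le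
  have hgap_nonneg : 0 ≤ (√A - w * √B) ^ 2 / w := by positivity
  have hgap : (1 + w⁻¹) * (A + w * B) - (√A + √B) ^ 2 = (√A - w * √B) ^ 2 / w := by
    field_simp
    linear_combination (-(w + 1)) * sq_sqrt hA - (w + w ^ 2) * sq_sqrt hB
  linarith

lemma sqrt_sub_add_sqrt_add_le {u : ℝ} (hu : -1 ≤ u) (hu' : u ≤ 1) :
    √(5 / 4 - u) + √((1 + u) / 2) ≤ 3 / 2 * √(3 / 2) := by
  have hcs := sqrt_add_sqrt_le_sqrt_mul (A := 5 / 4 - u) (B := (1 + u) / 2) (w := 2)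
    (by linarith) (by linarith) two_pos
  have hsum : (1 + 2⁻¹) * (5 / 4 - u + 2 * ((1 + u) / 2)) = (3 / 2) ^ 2 * (3 / 2) := by ring
  rwa [hsum, sqrt_mul (by positivity), sqrt_sq (by positivity)] at hcs

noncomputable def correlator (a b c d : ℝ) : ℝ :=
  -cos (a - c) + cos (a - d) / 2 - cos (b - c) / 2 - cos (b - d) / 2

lemma correlator_eq (a b c d : ℝ) :
    correlator a b c d =
      ((cos (c - d) / 2 - 1) * cos (a - c) + (-sin (c - d) / 2) * sin (a - c)) +
      ((-(1 + cos (c - d)) / 2) * cos (b - c) + (sin (c - d) / 2) * sin (b - c)) := by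
  have had : a - d = (a - c) + (c - d) := by ring
  have hbd : b - d = (b - c) + (c - d) := by ring
  rw [correlator, had, hbd, cos_add, cos_add]
  ring

lemma amplitude_sq_left (t : ℝ) : (cos t / 2 - 1) ^ 2 + (-sin t / 2) ^ 2 = 5 / 4 - cos t := by
  linear_combination sin_sq_add_cos_sq t / 4

lemma amplitude_sq_right (t : ℝ) :
    (-(1 + cos t) / 2) ^ 2 + (sin t / 2) ^ 2 = (1 + cos t) / 2 := by
  linear_combination sin_sq_add_cos_sq t / 4

lemma correlator_le (a b c d : ℝ) : correlator a b c d ≤ 3 / 2 * √(3 / 2) := by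
  set t := c - d
  have hleft := (isGreatest_mul_cos_add_mul_sin (cos t / 2 - 1) (-sin t / 2)).2 ⟨a - c, rfl⟩
  have hright := (isGreatest_mul_cos_add_mul_sin (-(1 + cos t) / 2) (sin t / 2)).2 ⟨b - c, rfl⟩
  rw [amplitude_sq_left] at hleft
  rw [amplitude_sq_right] at hright
  have hmax := sqrt_sub_add_sqrt_add_le (neg_one_le_cos t) (cos_le_one t)
  rw [correlator_eq]
  linarith

lemma exists_correlator_eq : ∃ a b c d, correlator a b c d = 3 / 2 * √(3 / 2) := by
  set t := arccos (-1 / 4)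
  have hcos : cos t = -1 / 4 := cos_arccos (by norm_num) (by norm_num)
  obtain ⟨x, hx⟩ := (isGreatest_mul_cos_add_mul_sin (cos t / 2 - 1) (-sin t / 2)).1
  obtain ⟨y, hy⟩ := (isGreatest_mul_cos_add_mul_sin (-(1 + cos t) / 2) (sin t / 2)).1
  beta_reduce at hx hy
  refine ⟨x, y, 0, -t, ?_⟩
  rw [correlator_eq]
  simp only [sub_zero, sub_neg_eq_add, zero_add]
  rw [hx, hy, amplitude_sq_left, amplitude_sq_right, hcos]
  have hquarter : √((1 + -1 / 4) / 2 : ℝ) = √(3 / 2) / 2 := by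
    rw [show ((1 + -1 / 4) / 2 : ℝ) = 3 / 2 / 2 ^ 2 by norm_num, sqrt_div' _ (by norm_num),
      sqrt_sq (by norm_num)]
  rw [hquarter, show (5 / 4 - -1 / 4 : ℝ) = 3 / 2 by norm_num]
  ring

noncomputable def successProb (θ₀ θ₁ ψ₀ ψ₁ : ℝ) : ℝ :=
  (1 / 4) * (sin (θ₀ - ψ₀) ^ 2 + (1 / 2) * cos (θ₀ - ψ₁) ^ 2 +
    (1 / 2) * sin (θ₁ - ψ₀) ^ 2 + (1 / 2) * sin (θ₁ - ψ₁) ^ 2)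

lemma successProb_eq (θ₀ θ₁ ψ₀ ψ₁ : ℝ) :
    successProb θ₀ θ₁ ψ₀ ψ₁ = 5 / 16 + correlator (2 * θ₀) (2 * θ₁) (2 * ψ₀) (2 * ψ₁) / 8 := by
  simp only [successProb, correlator, sin_sq_eq_half_sub, cos_sq, mul_sub]
  ring

lemma successProb_le (θ₀ θ₁ ψ₀ ψ₁ : ℝ) :
    successProb θ₀ θ₁ ψ₀ ψ₁ ≤ 5 / 16 + 3 / 2 * √(3 / 2) / 8 := by
  rw [successProb_eq]
  linarith [correlator_le (2 * θ₀) (2 * θ₁) (2 * ψ₀) (2 * ψ₁)]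

lemma exists_successProb_eq :
    ∃ θ₀ θ₁ ψ₀ ψ₁, successProb θ₀ θ₁ ψ₀ ψ₁ = 5 / 16 + 3 / 2 * √(3 / 2) / 8 := by
  obtain ⟨a, b, c, d, h⟩ := exists_correlator_eq
  refine ⟨a / 2, b / 2, c / 2, d / 2, ?_⟩
  simp only [successProb_eq, mul_div_cancel₀ _ (two_ne_zero : (2 : ℝ) ≠ 0), h]

/-- The maximum quantum success probability of the paper's partition 2+1+1+1
game equals `(1/4)(5/4 + (√6 + √(3/2))/4) ≈ 0.542`. -/
theorem partition_2111_quantum_value :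
    (∀ θ₀ θ₁ ψ₀ ψ₁ : ℝ,
      (1 / 4) * (sin (θ₀ - ψ₀) ^ 2 + (1 / 2) * cos (θ₀ - ψ₁) ^ 2 +
        (1 / 2) * sin (θ₁ - ψ₀) ^ 2 + (1 / 2) * sin (θ₁ - ψ₁) ^ 2)
        ≤ (1 / 4) * (5 / 4 + (Real.sqrt 6 + Real.sqrt (3 / 2)) / 4)) ∧
    (∃ θ₀ θ₁ ψ₀ ψ₁ : ℝ,
      (1 / 4) * (sin (θ₀ - ψ₀) ^ 2 + (1 / 2) * cos (θ₀ - ψ₁) ^ 2 +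
        (1 / 2) * sin (θ₁ - ψ₀) ^ 2 + (1 / 2) * sin (θ₁ - ψ₁) ^ 2)
        = (1 / 4) * (5 / 4 + (Real.sqrt 6 + Real.sqrt (3 / 2)) / 4)) := by
  have hsqrt6 : √6 = 2 * √(3 / 2) := by
    rw [show (6 : ℝ) = 2 ^ 2 * (3 / 2) by norm_num, sqrt_mul (by norm_num), sqrt_sq zero_le_two]
  have hvalue : (1 / 4) * (5 / 4 + (√6 + √(3 / 2)) / 4) = 5 / 16 + 3 / 2 * √(3 / 2) / 8 := by
    rw [hsqrt6]
    ring
  rw [hvalue]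
  exact ⟨successProb_le, exists_successProb_eq⟩
end

section
/- For every real number a with −1 ≤ a ≤ 1, √(2 + 2a) + √(5 − 4a) ≤ √6 + √(3/2), with equality if and only if a = −1/4. (Auxiliary inequality used to bound the quantum success probability of the partition 3+3+2+1 and 2+1+1+1 games.) -/
/-- Auxiliary inequality: for `a ∈ [-1, 1]`,
`√(2 + 2a) + √(5 - 4a) ≤ √6 + √(3/2)`, with equality iff `a = -1/4`. -/
theorem sqrt_sum_le_sqrt_six_add (a : ℝ) (h1 : -1 ≤ a) (h2 : a ≤ 1) :
    Real.sqrt (2 + 2 * a) + Real.sqrt (5 - 4 * a)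
      ≤ Real.sqrt 6 + Real.sqrt (3 / 2) ∧
    (Real.sqrt (2 + 2 * a) + Real.sqrt (5 - 4 * a)
      = Real.sqrt 6 + Real.sqrt (3 / 2) ↔ a = -(1 / 4)) := by
  have ha1 : (0:ℝ) ≤ 2 + 2 * a := by linarith
  have ha2 : (0:ℝ) ≤ 5 - 4 * a := by linarith
  have hs : Real.sqrt (2 + 2 * a) ^ 2 = 2 + 2 * a := Real.sq_sqrt ha1
  have ht : Real.sqrt (5 - 4 * a) ^ 2 = 5 - 4 * a := Real.sq_sqrt ha2
  have hs0 : 0 ≤ Real.sqrt (2 + 2 * a) := Real.sqrt_nonneg _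
  have ht0 : 0 ≤ Real.sqrt (5 - 4 * a) := Real.sqrt_nonneg _
  have h6 : Real.sqrt 6 ^ 2 = 6 := Real.sq_sqrt (by norm_num)
  have h32 : Real.sqrt (3/2) ^ 2 = 3/2 := Real.sq_sqrt (by norm_num)
  have h60 : 0 ≤ Real.sqrt 6 := Real.sqrt_nonneg _
  have h320 : 0 ≤ Real.sqrt (3/2) := Real.sqrt_nonneg _
  set s := Real.sqrt (2 + 2 * a) with hsdef
  set t := Real.sqrt (5 - 4 * a) with htdef
  have hst2 : (s * t) ^ 2 = (2 + 2 * a) * (5 - 4 * a) := by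
    rw [mul_pow, hs, ht]
  have hst : 2 * (s * t) ≤ 13/2 + 2 * a := by
    nlinarith [sq_nonneg (6 * a + 3/2), mul_nonneg hs0 ht0,
      sq_nonneg (2 * (s * t) - (13/2 + 2 * a))]
  have hle : s + t ≤ Real.sqrt 6 + Real.sqrt (3/2) := by
    nlinarith [hst, hs, ht, h6, h32, add_nonneg hs0 ht0, add_nonneg h60 h320,
      mul_nonneg h60 h320, sq_nonneg (s + t - (Real.sqrt 6 + Real.sqrt (3/2))),
      Real.sq_sqrt (show (0:ℝ) ≤ 9 by norm_num),
      Real.sqrt_mul_self (show (0:ℝ) ≤ 3 by norm_num)]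
  refine ⟨hle, ?_, ?_⟩
  · intro heq
    have hprod : Real.sqrt 6 * Real.sqrt (3/2) = 3 := by
      rw [← Real.sqrt_mul (by norm_num)]
      rw [show (6:ℝ) * (3/2) = 3 ^ 2 by norm_num]
      exact Real.sqrt_sq (by norm_num)
    have hsq : s ^ 2 + 2 * (s * t) + t ^ 2
        = Real.sqrt 6 ^ 2 + 2 * (Real.sqrt 6 * Real.sqrt (3/2)) + Real.sqrt (3/2) ^ 2 := by
      calc s ^ 2 + 2 * (s * t) + t ^ 2 = (s + t) ^ 2 := by ring
        _ = (Real.sqrt 6 + Real.sqrt (3/2)) ^ 2 := by rw [heq]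
        _ = _ := by ring
    rw [hs, ht, h6, h32, hprod] at hsq
    have h2st : 2 * (s * t) = 13/2 + 2 * a := by linarith
    have : (6 * a + 3/2) ^ 2 = 0 := by nlinarith [hst2, h2st]
    have := pow_eq_zero_iff (n := 2) (by norm_num) |>.mp this
    linarith
  · intro ha
    subst ha
    rw [hsdef, htdef]
    rw [show 2 + 2 * -(1/4 : ℝ) = 3/2 by norm_num,
        show 5 - 4 * -(1/4 : ℝ) = 6 by norm_num]
    ring
end
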